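/- For every β > 1 and every n ≥ 0, P_{φ^n(1)}(β) < 1, where φ is the morphism φ(1)=2, φ(2)=211 and P_w(X) = (-X)^k + Σ_{i=1}^k a_i(-X)^{k-i} for w = a_1⋯a_k over {1,2}. -/

import Mathlib

/-- The morphism φ on the alphabet {1,2}: φ(1) = 2, φ(2) = 211. -/
def phi : ℕ → List ℕ
  | 1 => [2]
  | 2 => [2, 1, 1]
  | _ => []

/-- Extension of φ to words by concatenation. -/
def phiW (w : List ℕ) : List ℕ := w.flatMap phi

/-- The polynomial P_{a₁⋯a_k}(X) = (-X)^k + Σ_{i=1}^k a_i (-X)^{k-i}, evaluated at x. -/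
def P (w : List ℕ) (x : ℝ) : ℝ :=
  (-x) ^ w.length + ∑ i ∈ Finset.range w.length, (w.getD i 0 : ℝ) * (-x) ^ (w.length - 1 - i)

/-! Writing `w_n = φⁿ(1)`, the substitution gives `w_{n+2} = w_{n+1} w_n w_n`, and `1 - P` is a
cocycle for concatenation: `1 - P_{uv} = (1 - P_v) + (-X)^{|v|} (1 - P_u)`. Since every `|w_n|` is
odd, this yields a three-term recurrence for `1 - P_{w_n}`, which is solved by the factorization
`1 - P_{w_n}(X) = X^{[n even]} ∏_{m<n} (X^{|w_m|} - 1)`; every factor is positive for `X > 1`. -/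

open Finset

lemma P_cons (a : ℕ) (w : List ℕ) (x : ℝ) :
    P (a :: w) x = P w x + (a - x - 1) * (-x) ^ w.length := by
  simp only [P, List.length_cons, sum_range_succ', List.getD_cons_succ, List.getD_cons_zero,
    Nat.add_sub_cancel, Nat.sub_zero, Nat.sub_sub, add_comm 1, pow_succ]
  ring

lemma one_sub_P_append (u v : List ℕ) (x : ℝ) :
    1 - P (u ++ v) x = (1 - P v x) + (-x) ^ v.length * (1 - P u x) := by
  induction u with
  | nil => simp [P]
  | cons a u ih =>
    rw [List.cons_append, P_cons, P_cons, List.length_append, pow_add]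
    linear_combination ih

lemma phiW_append (u v : List ℕ) : phiW (u ++ v) = phiW u ++ phiW v :=
  List.flatMap_append

def phiWord (n : ℕ) : List ℕ := phiW^[n] [1]

lemma phiWord_succ (n : ℕ) : phiWord (n + 1) = phiW (phiWord n) :=
  Function.iterate_succ_apply' phiW n [1]

lemma phiWord_add_two (n : ℕ) : phiWord (n + 2) = phiWord (n + 1) ++ phiWord n ++ phiWord n := by
  induction n with
  | zero => rfl
  | succ n ih =>
    rw [phiWord_succ (n + 2)]
    conv_lhs => rw [ih, phiW_append, phiW_append, ← phiWord_succ, ← phiWord_succ]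

/-- `|w_{n+1}| = 2 |w_n| - (-1)ⁿ`, stated without subtraction. -/
lemma length_phiWord_succ (n : ℕ) :
    (phiWord (n + 1)).length + (n + 1) % 2 = 2 * (phiWord n).length + n % 2 := by
  induction n with
  | zero => rfl
  | succ n ih =>
    have h := congrArg List.length (phiWord_add_two n)
    simp only [List.length_append] at h
    rw [show n + 1 + 1 = n + 2 from rfl, h]
    omega

lemma odd_length_phiWord (n : ℕ) : Odd (phiWord n).length := by
  rw [Nat.odd_iff]
  cases n with
  | zero => rfl
  | succ n => have := length_phiWord_succ n; omega

lemma one_sub_P_phiWord_add_two (x : ℝ) (n : ℕ) :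
    1 - P (phiWord (n + 2)) x = x ^ (2 * (phiWord n).length) * (1 - P (phiWord (n + 1)) x)
      - (x ^ (phiWord n).length - 1) * (1 - P (phiWord n) x) := by
  have hneg : (-x) ^ (phiWord n).length = -x ^ (phiWord n).length :=
    (odd_length_phiWord n).neg_pow x
  rw [phiWord_add_two, one_sub_P_append, one_sub_P_append, hneg, pow_mul']
  ring

theorem one_sub_P_phiWord (x : ℝ) (n : ℕ) :
    1 - P (phiWord n) x = x ^ ((n + 1) % 2) * ∏ m ∈ range n, (x ^ (phiWord m).length - 1) := by
  induction n using Nat.twoStepInduction with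
  | zero => simp [phiWord, P]
  | one => simp [phiWord, phiW, phi, P]; ring
  | more n ih₀ ih₁ =>
    have hexp : x ^ (2 * (phiWord n).length) * x ^ (n % 2)
        = x ^ (phiWord (n + 1)).length * x ^ ((n + 1) % 2) := by
      rw [← pow_add, ← pow_add, length_phiWord_succ]
    have hpar₁ : (n + 1 + 1) % 2 = n % 2 := by omega
    have hpar₂ : (n + 2 + 1) % 2 = (n + 1) % 2 := by omega
    rw [prod_range_succ, hpar₁] at ih₁
    rw [one_sub_P_phiWord_add_two, ih₀, ih₁, hpar₂, prod_range_succ, prod_range_succ]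
    linear_combination (∏ m ∈ range n, (x ^ (phiWord m).length - 1))
      * (x ^ (phiWord n).length - 1) * hexp

theorem P_phi_one_lt_one (β : ℝ) (hβ : 1 < β) (n : ℕ) : P (phiW^[n] [1]) β < 1 := by
  have hpos : 0 < β ^ ((n + 1) % 2) * ∏ m ∈ range n, (β ^ (phiWord m).length - 1) := by
    refine mul_pos (pow_pos (by linarith) _) (prod_pos fun m _ => ?_)
    exact sub_pos.2 (one_lt_pow₀ hβ (odd_length_phiWord m).pos.ne')
  have hfactor := one_sub_P_phiWord β n
  show P (phiWord n) β < 1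
  linarith
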